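/- Let W be a set, L C : W → ℝ with C ≥ 0. Suppose w* is optimal for the constrained problem with threshold C(w*) and there exists a sequence (wₙ) in W with C(wₙ) > C(w*) for all n, C(wₙ) → C(w*), and L(wₙ) ≤ L(w*) − ε for a fixed ε > 0. Then for every λ ≥ 0, w* is not a global minimizer of L + λ·C. -/
import Mathlib

theorem stmt_16 {W : Type*} (L C : W → ℝ) (hC : ∀ w, 0 ≤ C w) (wstar : W)
    (hcopt : ∀ w, C w ≤ C wstar → L wstar ≤ L w)
    (eps : ℝ) (heps : 0 < eps) (seq : ℕ → W)
    (hgt : ∀ n, C (seq n) > C wstar)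
    (hconv : Filter.Tendsto (fun n => C (seq n) - C wstar) Filter.atTop (nhds 0))
    (hloss : ∀ n, L (seq n) ≤ L wstar - eps) :
    ∀ lam : ℝ, 0 ≤ lam →
      ∃ n, L (seq n) + lam * C (seq n) < L wstar + lam * C wstar := by
  intro lam hlam
  have h2 : Filter.Tendsto (fun n => lam * (C (seq n) - C wstar)) Filter.atTop (nhds 0) := by
    simpa using hconv.const_mul lam
  have := (h2.eventually (gt_mem_nhds heps)).exists
  obtain ⟨n, hn⟩ := this
  refine ⟨n, ?_⟩
  have := hloss n
  nlinarith [hn, hloss n]
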